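/- Let G be a finite simple graph admitting a join into parts V1 and V2 with both |V1| and |V2| odd. Then there exists a set A ⊆ V(G) such that both A and V(G) \ A are odd sets; i.e., V(G) can be partitioned into two (possibly empty) odd sets. -/

import Mathlib

/-!
The heart is Gallai's theorem in the form: every vertex set `U` of a finite graph splits into a
part `X` inducing odd degrees and a part `U \ X` inducing even degrees. Over `𝔽₂`, with `A` the
adjacency matrix and `d` the degree vector, `X` is the support of a solution of
`(A + diag (d + 1)) x = d`; the system is solvable because its matrix is symmetric and `d` is
orthogonal to its kernel, using `yᵀ A y = 0`. The same identity shows that an odd set has even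
size.

Split `V₁ = X ∪ (V₁ \ X)` and `V₂ = Y ∪ (V₂ \ Y)` in this way. The join adds the even number `|Y|`
to the odd degrees inside `X`, and the odd number `|V₂ \ Y|` to the even degrees inside `V₁ \ X`
(symmetrically on the other side), so `X ∪ Y` and its complement are both odd sets.
-/

/-- A set `S` of vertices of `G` is *odd* if every vertex of `S` has an odd number of
neighbors inside `S`. -/
def SimpleGraph.IsOddSet {V : Type*} (G : SimpleGraph V) (S : Set V) : Prop :=
  ∀ v ∈ S, Odd (S ∩ G.neighborSet v).ncard

open Matrix

theorem Matrix.exists_mulVec_eq_of_forall_vecMul_eq_zero {m n K : Type*} [Fintype m]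
    [DecidableEq m] [Fintype n] [Field K] (M : Matrix m n K) (b : m → K)
    (h : ∀ y, y ᵥ* M = 0 → b ⬝ᵥ y = 0) : ∃ x, M *ᵥ x = b := by
  by_contra! hb
  obtain ⟨φ, hφb, hφM⟩ := Submodule.exists_le_ker_of_notMem
    (p := LinearMap.range M.mulVecLin) (v := b) (by rintro ⟨x, hx⟩; exact hb x hx)
  set y := (dotProductEquiv K m).symm φ
  have hφ : ∀ v, φ v = y ⬝ᵥ v := fun v => by
    rw [← dotProductEquiv_apply_apply, LinearEquiv.apply_symm_apply]
  refine hφb ?_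
  rw [hφ, dotProduct_comm]
  refine h y (dotProduct_eq_zero _ fun x => ?_)
  rw [← dotProduct_mulVec, ← hφ]
  exact hφM ⟨x, rfl⟩

theorem ZMod.eq_indicator_setOf_eq_one {α : Type*} (x : α → ZMod 2) :
    x = {a | x a = 1}.indicator 1 := by
  ext a
  by_cases ha : x a = 1
  · simp [ha]
  · have : ∀ c : ZMod 2, c ≠ 1 → c = 0 := by decide
    simpa [ha] using this _ ha

theorem Set.odd_ncard_sdiff {α : Type*} [Finite α] {s t : Set α} (h : t ⊆ s) (hs : Odd s.ncard)
    (ht : Even t.ncard) : Odd (s \ t).ncard := by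
  rw [Set.ncard_sdiff h]
  exact Nat.Odd.sub_even (Set.ncard_le_ncard h) hs ht

namespace SimpleGraph

variable {V : Type*} (G : SimpleGraph V)

def IsEvenSet (S : Set V) : Prop :=
  ∀ v ∈ S, Even (S ∩ G.neighborSet v).ncard

section Fintype

variable [Fintype V] [DecidableRel G.Adj]

theorem dotProduct_adjMatrix_mulVec_self_eq_zero {R : Type*} [CommRing R] [CharP R 2]
    (y : V → R) : y ⬝ᵥ (G.adjMatrix R *ᵥ y) = 0 := by
  have : y ⬝ᵥ (G.adjMatrix R *ᵥ y) = ∑ p : V × V, y p.1 * G.adjMatrix R p.1 p.2 * y p.2 := by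
    simp only [dotProduct, mulVec, Finset.mul_sum, Fintype.sum_prod_type, mul_assoc]
  rw [this]
  refine Finset.sum_ninvolution Prod.swap (fun p => ?_) (fun p hp => ?_)
    (fun _ => Finset.mem_univ _) Prod.swap_swap
  · rw [Prod.fst_swap, Prod.snd_swap, G.isSymm_adjMatrix.apply p.1 p.2]
    linear_combination CharTwo.add_self_eq_zero (y p.1 * G.adjMatrix R p.1 p.2 * y p.2)
  · rintro hswap
    obtain ⟨u, v⟩ := p
    obtain rfl : v = u := congrArg Prod.fst hswap
    simp at hp

theorem ncard_inter_neighborSet_add_ncard_compl_inter (S : Set V) (v : V) :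
    (S ∩ G.neighborSet v).ncard + (Sᶜ ∩ G.neighborSet v).ncard = G.degree v := by
  rw [Set.inter_comm, Set.inter_comm Sᶜ, ← Set.sdiff_eq, Set.ncard_inter_add_ncard_sdiff_eq_ncard,
    ← Nat.card_coe_set_eq, Nat.card_eq_fintype_card, card_neighborSet_eq_degree]

theorem adjMatrix_mulVec_indicator_apply {R : Type*} [NonAssocSemiring R] (S : Set V) (v : V) :
    (G.adjMatrix R *ᵥ S.indicator 1) v = ((S ∩ G.neighborSet v).ncard : R) := by
  classical
  have : S ∩ G.neighborSet v = ↑((G.neighborFinset v).filter (· ∈ S)) := by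
    ext u; simp [and_comm]
  rw [adjMatrix_mulVec_apply, Finset.sum_indicator_eq_sum_filter, this, Set.ncard_coe_finset]
  simp

theorem exists_adjMatrix_add_diagonal_mulVec_eq_degree [DecidableEq V] :
    ∃ x : V → ZMod 2, (G.adjMatrix (ZMod 2) + diagonal fun v => (G.degree v + 1 : ZMod 2)) *ᵥ x =
      fun v => (G.degree v : ZMod 2) := by
  set A := G.adjMatrix (ZMod 2)
  set deg : V → ZMod 2 := fun v => G.degree v
  refine exists_mulVec_eq_of_forall_vecMul_eq_zero _ _ fun y hy => ?_
  have hAy : ∀ v, (A *ᵥ y) v = (deg v + 1) * y v := fun v => by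
    have := congrFun hy v
    rw [vecMul_add, ← mulVec_transpose, transpose_adjMatrix, Pi.add_apply, vecMul_diagonal,
      Pi.zero_apply, add_eq_zero_iff_eq_neg, ZMod.neg_eq_self_mod_two] at this
    rw [this, mul_comm]
  have hAone : A *ᵥ 1 = deg := by ext v; simp [A, deg]
  have hidem : ∀ a : ZMod 2, a * a = a := by decide
  calc deg ⬝ᵥ y = 1 ⬝ᵥ (A *ᵥ y) := by
        rw [dotProduct_mulVec, ← mulVec_transpose, transpose_adjMatrix, hAone]
    _ = y ⬝ᵥ (A *ᵥ y) := by
        simp only [dotProduct, hAy, Pi.one_apply, one_mul]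
        exact Finset.sum_congr rfl fun v _ => by rw [mul_left_comm, hidem]
    _ = 0 := G.dotProduct_adjMatrix_mulVec_self_eq_zero y

end Fintype

section Finite

variable [Finite V]

theorem IsOddSet.even_ncard {S : Set V} (hS : G.IsOddSet S) : Even S.ncard := by
  have := Fintype.ofFinite V
  classical
  set x : V → ZMod 2 := S.indicator 1
  have hx : ∀ v, x v * (G.adjMatrix (ZMod 2) *ᵥ x) v = x v := fun v => by
    by_cases hv : v ∈ S
    · rw [adjMatrix_mulVec_indicator_apply, (ZMod.natCast_eq_one_iff_odd).2 (hS v hv), mul_one]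
    · simp [x, hv]
  rw [← ZMod.natCast_eq_zero_iff_even, ← G.dotProduct_adjMatrix_mulVec_self_eq_zero x]
  simp only [dotProduct, hx]
  simp [x, Set.indicator_apply, Finset.sum_boole, Set.ncard_eq_toFinset_card']

theorem exists_isOddSet_isEvenSet_compl : ∃ X, G.IsOddSet X ∧ G.IsEvenSet Xᶜ := by
  have := Fintype.ofFinite V
  classical
  obtain ⟨x, hx⟩ := G.exists_adjMatrix_add_diagonal_mulVec_eq_degree
  set X := {v | x v = 1}
  have hrow : ∀ v, ((X ∩ G.neighborSet v).ncard : ZMod 2) + (G.degree v + 1) * x v = G.degree v :=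
    fun v => by
      have := congrFun hx v
      rwa [add_mulVec, Pi.add_apply, mulVec_diagonal, ZMod.eq_indicator_setOf_eq_one x,
        adjMatrix_mulVec_indicator_apply, ← ZMod.eq_indicator_setOf_eq_one x] at this
  refine ⟨X, fun v hv => ?_, fun v hv => ?_⟩
  · have hX := hrow v
    rw [show x v = 1 from hv] at hX
    rw [← ZMod.natCast_eq_one_iff_odd]
    linear_combination hX - CharTwo.two_eq_zero (R := ZMod 2)
  · have hxv : x v = 0 := by
      rw [ZMod.eq_indicator_setOf_eq_one x]
      exact Set.indicator_of_notMem hv _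
    have hX := hrow v
    rw [hxv, mul_zero, add_zero] at hX
    have hdeg := congrArg (Nat.cast : ℕ → ZMod 2)
      (G.ncard_inter_neighborSet_add_ncard_compl_inter X v)
    push_cast at hdeg
    rw [← ZMod.natCast_eq_zero_iff_even]
    linear_combination hdeg - hX

theorem exists_isOddSet_isEvenSet_diff (U : Set V) :
    ∃ X ⊆ U, G.IsOddSet X ∧ G.IsEvenSet (U \ X) := by
  -- Apply the case `U = univ` to `G[U]`, viewed as a graph on `V` in which the vertices outside
  -- `U` are isolated, hence cannot lie in an odd set.
  set H := ((⊤ : G.Subgraph).induce U).spanningCoe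
  have hH : ∀ v u, u ∈ H.neighborSet v ↔ v ∈ U ∧ u ∈ U ∧ G.Adj v u := by simp [H]
  obtain ⟨X, hX, hXc⟩ := H.exists_isOddSet_isEvenSet_compl
  have hXU : X ⊆ U := fun v hv => by
    by_contra hvU
    have : X ∩ H.neighborSet v = ∅ := by ext u; simp [hH, hvU]
    simpa [this] using hX v hv
  refine ⟨X, hXU, fun v hv => ?_, fun v hv => ?_⟩
  · convert hX v hv using 2
    ext u
    have := @hXU u
    simp only [Set.mem_inter_iff, mem_neighborSet, hH]
    tauto
  · convert hXc v hv.2 using 2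
    ext u
    have := hv.1
    simp only [Set.mem_inter_iff, Set.mem_sdiff, Set.mem_compl_iff, mem_neighborSet, hH]
    tauto

variable {S T : Set V}

theorem ncard_union_inter_neighborSet (hST : ∀ u ∈ S, ∀ w ∈ T, G.Adj u w) {v : V} (hv : v ∈ S) :
    ((S ∪ T) ∩ G.neighborSet v).ncard = (S ∩ G.neighborSet v).ncard + T.ncard := by
  have hT : T ∩ G.neighborSet v = T := Set.inter_eq_left.2 fun w hw => hST v hv w hw
  have hdisj : Disjoint (S ∩ G.neighborSet v) T :=
    Set.disjoint_left.2 fun u hu huT => G.irrefl (hST u hu.1 u huT)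
  rw [Set.union_inter_distrib_right, hT, Set.ncard_union_eq hdisj]

theorem isOddSet_union_of_forall_adj (hST : ∀ u ∈ S, ∀ w ∈ T, G.Adj u w)
    (hS : ∀ v ∈ S, Odd ((S ∩ G.neighborSet v).ncard + T.ncard))
    (hT : ∀ v ∈ T, Odd ((T ∩ G.neighborSet v).ncard + S.ncard)) : G.IsOddSet (S ∪ T) := by
  rintro v (hv | hv)
  · rw [G.ncard_union_inter_neighborSet hST hv]
    exact hS v hv
  · rw [Set.union_comm, G.ncard_union_inter_neighborSet (fun u hu w hw => (hST w hw u hu).symm) hv]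
    exact hT v hv

end Finite

end SimpleGraph

theorem stmt1_general {V : Type*} [Fintype V] (G : SimpleGraph V)
    (V1 V2 : Set V)
    (hdisj : Disjoint V1 V2) (hcover : V1 ∪ V2 = Set.univ)
    (hjoin : ∀ u ∈ V1, ∀ w ∈ V2, G.Adj u w)
    (hodd1 : Odd V1.ncard) (hodd2 : Odd V2.ncard) :
    ∃ A : Set V, G.IsOddSet A ∧ G.IsOddSet Aᶜ := by
  obtain ⟨X, hXV1, hX, hV1X⟩ := G.exists_isOddSet_isEvenSet_diff V1
  obtain ⟨Y, hYV2, hY, hV2Y⟩ := G.exists_isOddSet_isEvenSet_diff V2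
  have hcompl : (X ∪ Y)ᶜ = (V1 \ X) ∪ (V2 \ Y) := by
    ext u
    have hu : u ∈ V1 ∪ V2 := hcover ▸ Set.mem_univ u
    have := @Set.disjoint_left.1 hdisj u
    have := @hXV1 u
    have := @hYV2 u
    simp only [Set.mem_compl_iff, Set.mem_union, Set.mem_sdiff] at hu ⊢
    tauto
  refine ⟨X ∪ Y, G.isOddSet_union_of_forall_adj (fun u hu w hw => hjoin u (hXV1 hu) w (hYV2 hw))
    (fun v hv => (hX v hv).add_even hY.even_ncard)
    (fun v hv => (hY v hv).add_even hX.even_ncard), ?_⟩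
  rw [hcompl]
  exact G.isOddSet_union_of_forall_adj (fun u hu w hw => hjoin u hu.1 w hw.1)
    (fun v hv => (hV1X v hv).add_odd (Set.odd_ncard_sdiff hYV2 hodd2 hY.even_ncard))
    (fun v hv => (hV2Y v hv).add_odd (Set.odd_ncard_sdiff hXV1 hodd1 hX.even_ncard))

/-- If a finite graph `G` admits a join into two parts of odd size, then its vertex set can
be partitioned into two (possibly empty) odd sets. -/
theorem stmt1 {V : Type*} [Fintype V] (G : SimpleGraph V)
    (V1 V2 : Set V) (h1 : V1.Nonempty) (h2 : V2.Nonempty)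
    (hdisj : Disjoint V1 V2) (hcover : V1 ∪ V2 = Set.univ)
    (hjoin : ∀ u ∈ V1, ∀ w ∈ V2, G.Adj u w)
    (hodd1 : Odd V1.ncard) (hodd2 : Odd V2.ncard) :
    ∃ A : Set V, G.IsOddSet A ∧ G.IsOddSet Aᶜ :=
  stmt1_general G V1 V2 hdisj hcover hjoin hodd1 hodd2
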